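/- arXiv:1609.01627 — 4 statements merged into one kernel-verified Lean document; each statement's English description precedes it below -/
import Mathlib

section
/- Let T : H → H be a nonexpansive operator on a real Hilbert space H, let (x_n) be a sequence in H converging weakly to x, and suppose Tx_n - x_n converges strongly to 0. Then x is a fixed point of T (demiclosedness principle). -/
open Filter Topology RealInnerProductSpace

/-- Demiclosedness principle: if `T` is nonexpansive on a real Hilbert space,
`x n` converges weakly to `p` and `T (x n) - x n → 0` strongly, then `T p = p`. -/
theorem demiclosedness
    {H : Type*} [NormedAddCommGroup H] [InnerProductSpace ℝ H] [CompleteSpace H]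
    (T : H → H) (hT : ∀ x y : H, ‖T x - T y‖ ≤ ‖x - y‖)
    (x : ℕ → H) (p : H)
    (hweak : ∀ y : H, Tendsto (fun n => ⟪x n, y⟫) atTop (nhds ⟪p, y⟫))
    (hres : Tendsto (fun n => T (x n) - x n) atTop (nhds 0)) :
    T p = p := by
  -- boundedness of (x n) via Banach–Steinhaus
  obtain ⟨C, hC⟩ : ∃ C, ∀ n, ‖x n‖ ≤ C := by
    have hpt : ∀ y : H, ∃ C, ∀ n : ℕ, ‖(innerSL ℝ (x n)) y‖ ≤ C := by
      intro y
      have := (hweak y).norm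
      obtain ⟨C, hC⟩ := (this.bddAbove_range).imp fun C hC => hC
      exact ⟨C, fun n => hC ⟨n, rfl⟩⟩
    obtain ⟨C', hC'⟩ := banach_steinhaus hpt
    refine ⟨C', fun n => ?_⟩
    have := hC' n
    rwa [innerSL_apply_norm] at this
  set r := p - T p with hr
  set d := fun n => ‖T (x n) - x n‖ with hd
  have hdt : Tendsto d atTop (nhds 0) := by
    simpa using hres.norm
  have hinner : Tendsto (fun n => ⟪x n - p, r⟫) atTop (nhds 0) := by
    have h := (hweak r).sub (tendsto_const_nhds (x := (⟪p, r⟫ : ℝ)))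
    simp only [sub_self] at h
    convert h using 2 with n
    rw [inner_sub_left]
  have hbnd : ∀ n, ‖x n - p‖ ≤ C + ‖p‖ := fun n =>
    (norm_sub_le _ _).trans (by linarith [hC n])
  have hprod : Tendsto (fun n => 2 * d n * ‖x n - p‖) atTop (nhds 0) := by
    have h0 : ∀ n, 0 ≤ 2 * d n * ‖x n - p‖ := fun n => by positivity
    have hub : ∀ n, 2 * d n * ‖x n - p‖ ≤ 2 * (C + ‖p‖) * d n := fun n => by
      have := hbnd n
      have hd0 : 0 ≤ d n := norm_nonneg _
      nlinarith
    have : Tendsto (fun n => 2 * (C + ‖p‖) * d n) atTop (nhds 0) := by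
      simpa using hdt.const_mul (2 * (C + ‖p‖))
    exact squeeze_zero h0 hub this
  have hkey : ∀ n, ‖r‖ ^ 2 ≤ 2 * d n * ‖x n - p‖ + d n ^ 2 - 2 * ⟪x n - p, r⟫ := by
    intro n
    have h1 : ‖x n - T p‖ ≤ d n + ‖x n - p‖ := by
      calc ‖x n - T p‖ ≤ ‖x n - T (x n)‖ + ‖T (x n) - T p‖ := norm_sub_le_norm_sub_add_norm_sub _ _ _
        _ ≤ d n + ‖x n - p‖ := by
            have := hT (x n) p
            have : ‖x n - T (x n)‖ = d n := by rw [hd]; exact (norm_sub_rev _ _)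
            linarith [hT (x n) p, this.le, this.ge]
    have h2 : ‖x n - T p‖ ^ 2 ≤ (d n + ‖x n - p‖) ^ 2 := by
      have := norm_nonneg (x n - T p)
      nlinarith
    have h3 : x n - T p = (x n - p) + r := by rw [hr]; abel
    have h4 : ‖(x n - p) + r‖ ^ 2 = ‖x n - p‖ ^ 2 + 2 * ⟪x n - p, r⟫ + ‖r‖ ^ 2 :=
      norm_add_sq_real _ _
    rw [h3, h4] at h2
    nlinarith
  have hlim : Tendsto (fun n => 2 * d n * ‖x n - p‖ + d n ^ 2 - 2 * ⟪x n - p, r⟫)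
      atTop (nhds 0) := by
    have := (hprod.add (hdt.pow 2)).sub (hinner.const_mul 2)
    simpa using this
  have hfin : ‖r‖ ^ 2 ≤ 0 :=
    le_of_tendsto_of_tendsto' tendsto_const_nhds hlim hkey
  have : ‖r‖ = 0 := by nlinarith [norm_nonneg r, sq_nonneg ‖r‖]
  have hr0 : r = 0 := norm_eq_zero.mp this
  have : p - T p = 0 := hr0
  have := sub_eq_zero.mp this
  exact this.symm
end

section
/- Let T : H → H be nonexpansive with Fix T ≠ ∅, let x̄ be any fixed point of T, and consider the iteration x_{n+1} = β_n x_n + λ_n (T(β_n x_n) - β_n x_n) with 0 < β_n ≤ 1 and 0 < λ_n ≤ 1 for all n. Then ‖x_n - x̄‖ ≤ max{‖x_0 - x̄‖, ‖x̄‖} for all n ≥ 0; in particular the sequence (x_n) is bounded. -/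
/-- Boundedness of the modified Krasnosel'skii–Mann iteration: if `x̄` is a
fixed point of the nonexpansive map `T` and
`x (n+1) = β n • x n + λ n • (T (β n • x n) - β n • x n)` with
`0 < β n ≤ 1` and `0 < λ n ≤ 1`, then `‖x n - x̄‖ ≤ max ‖x 0 - x̄‖ ‖x̄‖` for all `n`. -/
theorem modKM_bounded
    {H : Type*} [NormedAddCommGroup H] [InnerProductSpace ℝ H] [CompleteSpace H]
    (T : H → H) (hT : ∀ x y : H, ‖T x - T y‖ ≤ ‖x - y‖)
    (β lam : ℕ → ℝ)
    (hβ : ∀ n, 0 < β n ∧ β n ≤ 1) (hlam : ∀ n, 0 < lam n ∧ lam n ≤ 1)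
    (x : ℕ → H) (xbar : H) (hfix : T xbar = xbar)
    (hiter : ∀ n, x (n + 1) = β n • x n + lam n • (T (β n • x n) - β n • x n)) :
    ∀ n, ‖x n - xbar‖ ≤ max ‖x 0 - xbar‖ ‖xbar‖ := by
  set M := max ‖x 0 - xbar‖ ‖xbar‖ with hM
  have hM0 : ‖xbar‖ ≤ M := le_max_right _ _
  intro n
  induction n with
  | zero => exact le_max_left _ _
  | succ n ih =>
    obtain ⟨hβ0, hβ1⟩ := hβ n
    obtain ⟨hl0, hl1⟩ := hlam n
    -- bound for ‖β•x n - xbar‖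
    have key : ‖β n • x n - xbar‖ ≤ M := by
      have h1 : β n • x n - xbar = β n • (x n - xbar) + (β n - 1) • xbar := by
        module
      calc ‖β n • x n - xbar‖ = ‖β n • (x n - xbar) + (β n - 1) • xbar‖ := by rw [h1]
        _ ≤ ‖β n • (x n - xbar)‖ + ‖(β n - 1) • xbar‖ := norm_add_le _ _
        _ = β n * ‖x n - xbar‖ + (1 - β n) * ‖xbar‖ := by
            rw [norm_smul, norm_smul, Real.norm_eq_abs, Real.norm_eq_abs,
              abs_of_pos hβ0, abs_of_nonpos (by linarith), neg_sub]
        _ ≤ β n * M + (1 - β n) * M := by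
            have := mul_le_mul_of_nonneg_left ih hβ0.le
            have := mul_le_mul_of_nonneg_left hM0 (by linarith : (0:ℝ) ≤ 1 - β n)
            linarith
        _ = M := by ring
    have hTkey : ‖T (β n • x n) - xbar‖ ≤ M := by
      calc ‖T (β n • x n) - xbar‖ = ‖T (β n • x n) - T xbar‖ := by rw [hfix]
        _ ≤ ‖β n • x n - xbar‖ := hT _ _
        _ ≤ M := key
    have h2 : x (n + 1) - xbar
        = (1 - lam n) • (β n • x n - xbar) + lam n • (T (β n • x n) - xbar) := by
      rw [hiter n]
      module
    calc ‖x (n + 1) - xbar‖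
        = ‖(1 - lam n) • (β n • x n - xbar) + lam n • (T (β n • x n) - xbar)‖ := by rw [h2]
      _ ≤ ‖(1 - lam n) • (β n • x n - xbar)‖ + ‖lam n • (T (β n • x n) - xbar)‖ :=
          norm_add_le _ _
      _ = (1 - lam n) * ‖β n • x n - xbar‖ + lam n * ‖T (β n • x n) - xbar‖ := by
          rw [norm_smul, norm_smul, Real.norm_eq_abs, Real.norm_eq_abs,
            abs_of_nonneg (by linarith), abs_of_pos hl0]
      _ ≤ (1 - lam n) * M + lam n * M := by
          have := mul_le_mul_of_nonneg_left key (by linarith : (0:ℝ) ≤ 1 - lam n)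
          have := mul_le_mul_of_nonneg_left hTkey hl0.le
          linarith
      _ = M := by ring
end

section
/- Let T : H → H be nonexpansive with Fix T ≠ ∅, and let (λ_n), (β_n) satisfy: 0 < β_n ≤ 1, β_n → 1, ∑(1-β_n) = +∞, ∑|β_n - β_{n-1}| < +∞; and 0 < λ_n ≤ 1, liminf λ_n > 0, ∑|λ_n - λ_{n-1}| < +∞. Then the sequence generated by x_{n+1} = β_n x_n + λ_n(T(β_n x_n) - β_n x_n) from any x_0 ∈ H converges strongly to the projection of 0 onto Fix T, i.e. to the minimal norm fixed point of T. -/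
/-!
The iterates stay in the ball of radius `max ‖x₀ - p‖ ‖p‖` around `p`. Comparing two consecutive
steps gives `‖xₙ₊₂ - xₙ₊₁‖ ≤ βₙ₊₁ ‖xₙ₊₁ - xₙ‖ + O(|βₙ₊₁ - βₙ| + |λₙ₊₁ - λₙ|)`, so Xu's lemma
(`aₙ₊₁ ≤ (1 - γₙ) aₙ + γₙ δₙ + cₙ` with `∑ γₙ = ∞`, `limsup δₙ ≤ 0`, `∑ cₙ < ∞` forces `aₙ → 0`)
yields `‖xₙ₊₁ - xₙ‖ → 0`; as `λₙ` stays away from `0` and `βₙ → 1`, also `‖xₙ - T xₙ‖ → 0`.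
Weak cluster points of `(xₙ)`, taken along ultrafilters via Banach–Alaoglu, are therefore fixed
points of `T`, and the minimal-norm point `p` of the convex set `Fix T` satisfies
`⟪p, p⟫ ≤ ⟪z, p⟫` on `Fix T`; together, `liminf ⟪xₙ, p⟫ ≥ ‖p‖²`. Expanding `‖βₙ xₙ - p‖²` gives
`‖xₙ₊₁ - p‖² ≤ βₙ ‖xₙ - p‖² + (1 - βₙ) δₙ` with `limsup δₙ ≤ 0`, and Xu's lemma applies again.
-/

open Filter Topology Function
open scoped RealInnerProductSpace

section RecursiveInequality

open Finset

theorem tendsto_prod_range_one_sub_of_not_summable {γ : ℕ → ℝ} (h0 : ∀ n, 0 ≤ γ n)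
    (h1 : ∀ n, γ n ≤ 1) (hγ : ¬ Summable γ) :
    Tendsto (fun n => ∏ k ∈ range n, (1 - γ k)) atTop (𝓝 0) := by
  have hexp : Tendsto (fun n => Real.exp (-∑ k ∈ range n, γ k)) atTop (𝓝 0) :=
    Real.tendsto_exp_neg_atTop_nhds_zero.comp
      ((not_summable_iff_tendsto_nat_atTop_of_nonneg h0).mp hγ)
  refine squeeze_zero (fun n => prod_nonneg fun k _ => sub_nonneg.2 (h1 k)) (fun n => ?_) hexp
  rw [← sum_neg_distrib, Real.exp_sum]
  exact prod_le_prod (fun k _ => sub_nonneg.2 (h1 k))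
    fun k _ => by linarith [Real.add_one_le_exp (-γ k)]

theorem le_prod_range_one_sub_mul {b γ : ℕ → ℝ} (h1 : ∀ n, γ n ≤ 1)
    (hb : ∀ n, b (n + 1) ≤ (1 - γ n) * b n) (n : ℕ) :
    b n ≤ (∏ k ∈ range n, (1 - γ k)) * max (b 0) 0 := by
  induction n with
  | zero => simp
  | succ n ih =>
    calc b (n + 1) ≤ (1 - γ n) * b n := hb n
      _ ≤ (1 - γ n) * ((∏ k ∈ range n, (1 - γ k)) * max (b 0) 0) :=
        mul_le_mul_of_nonneg_left ih (sub_nonneg.2 (h1 n))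
      _ = (∏ k ∈ range (n + 1), (1 - γ k)) * max (b 0) 0 := by rw [prod_range_succ]; ring

theorem eventually_le_of_eventually_le_one_sub_mul {b γ : ℕ → ℝ} (h0 : ∀ n, 0 ≤ γ n)
    (h1 : ∀ n, γ n ≤ 1) (hγ : ¬ Summable γ)
    (hb : ∀ᶠ n in atTop, b (n + 1) ≤ (1 - γ n) * b n) {ε : ℝ} (hε : 0 < ε) :
    ∀ᶠ n in atTop, b n ≤ ε := by
  obtain ⟨N, hN⟩ := eventually_atTop.1 hb
  have hprod := (tendsto_prod_range_one_sub_of_not_summable (fun k => h0 (k + N))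
    (fun k => h1 (k + N)) (mt (summable_nat_add_iff N).1 hγ)).mul_const (max (b N) 0)
  rw [zero_mul] at hprod
  obtain ⟨K, hK⟩ := eventually_atTop.1 (hprod.eventually (ge_mem_nhds hε))
  refine eventually_atTop.2 ⟨K + N, fun n hn => ?_⟩
  obtain ⟨k, rfl⟩ : ∃ k, n = k + N := ⟨n - N, by omega⟩
  refine (le_prod_range_one_sub_mul (b := fun k => b (k + N)) (fun k => h1 (k + N))
    (fun k => ?_) k).trans (by simpa using hK k (by omega))
  simpa [Nat.add_right_comm] using hN (k + N) (by omega)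

/-- Xu's lemma. -/
theorem tendsto_zero_of_le_one_sub_mul_add {a γ δ c : ℕ → ℝ} (ha : ∀ n, 0 ≤ a n)
    (hγ0 : ∀ n, 0 ≤ γ n) (hγ1 : ∀ n, γ n ≤ 1) (hγ : ¬ Summable γ) (hc0 : ∀ n, 0 ≤ c n)
    (hc : Summable c) (hδ : ∀ ε > 0, ∀ᶠ n in atTop, δ n ≤ ε)
    (hrec : ∀ n, a (n + 1) ≤ (1 - γ n) * a n + γ n * δ n + c n) :
    Tendsto a atTop (𝓝 0) := by
  refine tendsto_order.2 ⟨fun e he => .of_forall fun n => he.trans_le (ha n), fun e he => ?_⟩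
  obtain ⟨ε, hε, hεe⟩ : ∃ ε, 0 < ε ∧ 3 * ε < e := ⟨e / 4, by positivity, by linarith⟩
  set σ : ℕ → ℝ := fun n => ∑ i ∈ range n, c i
  have htail : ∀ᶠ N in atTop, ∑' i, c i - σ N < ε := by
    have := (tendsto_const_nhds (x := ∑' i, c i)).sub hc.hasSum.tendsto_sum_nat
    simpa using this.eventually (gt_mem_nhds (show (∑' i, c i) - ∑' i, c i < ε by simpa))
  obtain ⟨N₀, hδN₀⟩ := eventually_atTop.1 (hδ ε hε)
  obtain ⟨N, hNN₀, hσN⟩ := ((eventually_ge_atTop N₀).and htail).exists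
  have hσ_le : ∀ n, σ n ≤ ∑' i, c i := fun n => hc.sum_le_tsum _ fun i _ => hc0 i
  have hσ_mono : Monotone σ := monotone_nat_of_le_succ fun n => by
    simpa [σ, sum_range_succ] using hc0 n
  have hb : ∀ᶠ n in atTop, a (n + 1) - ε - (σ (n + 1) - σ N)
      ≤ (1 - γ n) * (a n - ε - (σ n - σ N)) := by
    filter_upwards [eventually_ge_atTop N] with n hn
    have hσn : σ (n + 1) = σ n + c n := sum_range_succ c n
    have hγδ := mul_le_mul_of_nonneg_left (hδN₀ n (hNN₀.trans hn)) (hγ0 n)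
    have hγσ := mul_nonneg (hγ0 n) (sub_nonneg.2 (hσ_mono hn))
    linarith [hrec n]
  filter_upwards [eventually_le_of_eventually_le_one_sub_mul (b := fun n => a n - ε - (σ n - σ N))
    hγ0 hγ1 hγ hb hε] with n hn
  linarith [hσ_le n]

end RecursiveInequality

theorem norm_apply_sub_le_two_mul {E : Type*} [SeminormedAddCommGroup E] {T : E → E}
    (hT : LipschitzWith 1 T) {p : E} (hp : IsFixedPt T p) (y : E) : ‖T y - y‖ ≤ 2 * ‖y - p‖ := by
  have hTy : ‖T y - p‖ ≤ ‖y - p‖ := by simpa [hp.eq] using hT.norm_sub_le y p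
  linarith [norm_sub_le_norm_sub_add_norm_sub (T y) p y, norm_sub_rev p y]

section NormedSpace

variable {E : Type*} [NormedAddCommGroup E] [NormedSpace ℝ E]

theorem LipschitzWith.convex_fixedPoints [StrictConvexSpace ℝ E] {T : E → E}
    (hT : LipschitzWith 1 T) : Convex ℝ (fixedPoints T) := by
  refine convex_iff_segment_subset.2 fun z (hz : IsFixedPt T z) w (hw : IsFixedPt T w) => ?_
  rw [segment_eq_image_lineMap]
  rintro _ ⟨t, ⟨ht0, ht1⟩, rfl⟩
  set m := AffineMap.lineMap z w t
  have hzm : dist z (T m) ≤ t * dist z w := by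
    simpa [m, hz.eq, abs_of_nonneg ht0] using hT.dist_le_mul z m
  have hmw : dist (T m) w ≤ (1 - t) * dist z w := by
    simpa [m, hw.eq, abs_of_nonneg (sub_nonneg.2 ht1)] using hT.dist_le_mul m w
  have htri := dist_triangle z (T m) w
  exact eq_lineMap_of_dist_eq_mul_of_dist_eq_mul (by linarith) (by linarith)

def relax (T : E → E) (l : ℝ) (w : E) : E := w + l • (T w - w)

theorem relax_sub_relax (T : E → E) (l l' : ℝ) (w : E) :
    relax T l' w - relax T l w = (l' - l) • (T w - w) := by
  simp only [relax]; module

theorem norm_relax_sub_relax_le {T : E → E} (hT : LipschitzWith 1 T) {l : ℝ}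
    (hl : l ∈ Set.Icc (0 : ℝ) 1) (w w' : E) : ‖relax T l w - relax T l w'‖ ≤ ‖w - w'‖ := by
  have h : relax T l w - relax T l w' = (1 - l) • (w - w') + l • (T w - T w') := by
    simp only [relax]; module
  have hTw : ‖T w - T w'‖ ≤ ‖w - w'‖ := by simpa using hT.norm_sub_le w w'
  calc ‖relax T l w - relax T l w'‖ ≤ (1 - l) * ‖w - w'‖ + l * ‖T w - T w'‖ := by
        rw [h]
        refine (norm_add_le _ _).trans_eq ?_
        rw [norm_smul, norm_smul, Real.norm_of_nonneg (sub_nonneg.2 hl.2),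
          Real.norm_of_nonneg hl.1]
    _ ≤ (1 - l) * ‖w - w'‖ + l * ‖w - w'‖ := by gcongr; exact hl.1
    _ = ‖w - w'‖ := by ring

theorem norm_relax_sub_le {T : E → E} (hT : LipschitzWith 1 T) {l : ℝ}
    (hl : l ∈ Set.Icc (0 : ℝ) 1) {p : E} (hp : IsFixedPt T p) (w : E) :
    ‖relax T l w - p‖ ≤ ‖w - p‖ := by
  simpa [relax, hp.eq] using norm_relax_sub_relax_le hT hl w p

theorem norm_smul_sub_le_max {b : ℝ} (hb : b ∈ Set.Icc (0 : ℝ) 1) (y p : E) :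
    ‖b • y - p‖ ≤ max ‖y - p‖ ‖p‖ := by
  have h : b • y - p = b • (y - p) + (1 - b) • (-p) := by module
  simpa [h] using convex_closedBall (0 : E) (max ‖y - p‖ ‖p‖) (x := y - p) (y := -p) (by simp)
    (by simp) hb.1 (sub_nonneg.2 hb.2) (add_sub_cancel b 1)


def IsModKMSeq (T : E → E) (β lam : ℕ → ℝ) (x : ℕ → E) : Prop :=
  ∀ n, x (n + 1) = relax T (lam n) (β n • x n)

namespace IsModKMSeq

variable {T : E → E} {β lam : ℕ → ℝ} {x : ℕ → E}

theorem norm_sub_le (hx : IsModKMSeq T β lam x) (hT : LipschitzWith 1 T)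
    (hβ : ∀ n, β n ∈ Set.Icc (0 : ℝ) 1) (hlam : ∀ n, lam n ∈ Set.Icc (0 : ℝ) 1) {p : E}
    (hp : IsFixedPt T p) (n : ℕ) : ‖x n - p‖ ≤ max ‖x 0 - p‖ ‖p‖ := by
  induction n with
  | zero => exact le_max_left _ _
  | succ n ih =>
    rw [hx n]
    calc ‖relax T (lam n) (β n • x n) - p‖ ≤ ‖β n • x n - p‖ := norm_relax_sub_le hT (hlam n) hp _
      _ ≤ max ‖x n - p‖ ‖p‖ := norm_smul_sub_le_max (hβ n) _ _
      _ ≤ max ‖x 0 - p‖ ‖p‖ := max_le ih (le_max_right _ _)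

theorem norm_le (hx : IsModKMSeq T β lam x) (hT : LipschitzWith 1 T)
    (hβ : ∀ n, β n ∈ Set.Icc (0 : ℝ) 1) (hlam : ∀ n, lam n ∈ Set.Icc (0 : ℝ) 1) {p : E}
    (hp : IsFixedPt T p) (n : ℕ) : ‖x n‖ ≤ 2 * max ‖x 0 - p‖ ‖p‖ := by
  linarith [hx.norm_sub_le hT hβ hlam hp n, norm_le_norm_sub_add (x n) p,
    le_max_right ‖x 0 - p‖ ‖p‖]

theorem norm_succ_succ_sub_le (hx : IsModKMSeq T β lam x) (hT : LipschitzWith 1 T) {n : ℕ}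
    (hβ : β (n + 1) ∈ Set.Icc (0 : ℝ) 1) (hlam : lam (n + 1) ∈ Set.Icc (0 : ℝ) 1) :
    ‖x (n + 1 + 1) - x (n + 1)‖ ≤ β (n + 1) * ‖x (n + 1) - x n‖ + |β (n + 1) - β n| * ‖x n‖
      + |lam (n + 1) - lam n| * ‖T (β n • x n) - β n • x n‖ := by
  set y := β n • x n
  set y' := β (n + 1) • x (n + 1)
  have hsplit : x (n + 1 + 1) - x (n + 1) = (relax T (lam (n + 1)) y' - relax T (lam (n + 1)) y)
      + (relax T (lam (n + 1)) y - relax T (lam n) y) := by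
    rw [sub_add_sub_cancel, ← hx (n + 1), ← hx n]
  have hyy : y' - y = β (n + 1) • (x (n + 1) - x n) + (β (n + 1) - β n) • x n := by
    simp only [y, y']; module
  calc ‖x (n + 1 + 1) - x (n + 1)‖
      ≤ ‖y' - y‖ + |lam (n + 1) - lam n| * ‖T y - y‖ := by
        rw [hsplit, relax_sub_relax]
        refine (norm_add_le _ _).trans ?_
        rw [norm_smul, Real.norm_eq_abs]
        gcongr
        exact norm_relax_sub_relax_le hT hlam y' y
    _ ≤ β (n + 1) * ‖x (n + 1) - x n‖ + |β (n + 1) - β n| * ‖x n‖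
      + |lam (n + 1) - lam n| * ‖T y - y‖ := by
        rw [hyy]
        gcongr
        refine (norm_add_le _ _).trans_eq ?_
        rw [norm_smul, norm_smul, Real.norm_of_nonneg hβ.1, Real.norm_eq_abs]

theorem tendsto_norm_succ_sub (hx : IsModKMSeq T β lam x) (hT : LipschitzWith 1 T)
    (hβ : ∀ n, β n ∈ Set.Icc (0 : ℝ) 1) (hlam : ∀ n, lam n ∈ Set.Icc (0 : ℝ) 1) {p : E}
    (hp : IsFixedPt T p) (hβdiv : ¬ Summable (fun n => 1 - β n))
    (hβvar : Summable (fun n => |β (n + 1) - β n|))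
    (hlamvar : Summable (fun n => |lam (n + 1) - lam n|)) :
    Tendsto (fun n => ‖x (n + 1) - x n‖) atTop (𝓝 0) := by
  set R := max ‖x 0 - p‖ ‖p‖
  have hxR := hx.norm_le hT hβ hlam hp
  have hyR : ∀ n, ‖T (β n • x n) - β n • x n‖ ≤ 2 * R := fun n =>
    (norm_apply_sub_le_two_mul hT hp _).trans <| mul_le_mul_of_nonneg_left
      ((norm_smul_sub_le_max (hβ n) _ _).trans
        (max_le (hx.norm_sub_le hT hβ hlam hp n) (le_max_right _ _))) zero_le_two
  have hrec : ∀ n, ‖x (n + 1 + 1) - x (n + 1)‖ ≤ (1 - (1 - β (n + 1))) * ‖x (n + 1) - x n‖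
      + (1 - β (n + 1)) * 0 + 2 * R * (|β (n + 1) - β n| + |lam (n + 1) - lam n|) := by
    intro n
    have hβR := mul_le_mul_of_nonneg_left (hxR n) (abs_nonneg (β (n + 1) - β n))
    have hlamR := mul_le_mul_of_nonneg_left (hyR n) (abs_nonneg (lam (n + 1) - lam n))
    rw [sub_sub_cancel, mul_zero, add_zero]
    linarith [hx.norm_succ_succ_sub_le hT (hβ (n + 1)) (hlam (n + 1))]
  have hR : 0 ≤ R := (norm_nonneg _).trans (le_max_right _ _)
  have hγ : ¬ Summable (fun n => 1 - β (n + 1)) :=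
    mt (summable_nat_add_iff (f := fun n => 1 - β n) 1).1 hβdiv
  exact tendsto_zero_of_le_one_sub_mul_add (fun n => norm_nonneg _)
    (fun n => sub_nonneg.2 (hβ _).2) (fun n => sub_le_self _ (hβ _).1) hγ
    (fun n => by positivity) ((hβvar.add hlamvar).mul_left _)
    (fun ε hε => .of_forall fun _ => hε.le) hrec

theorem tendsto_norm_sub_apply (hx : IsModKMSeq T β lam x) (hT : LipschitzWith 1 T)
    (hβ : ∀ n, β n ∈ Set.Icc (0 : ℝ) 1) (hlam : ∀ n, 0 ≤ lam n) {M : ℝ} (hxM : ∀ n, ‖x n‖ ≤ M)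
    (hβlim : Tendsto β atTop (𝓝 1)) (hlaminf : 0 < liminf lam atTop)
    (hdiff : Tendsto (fun n => ‖x (n + 1) - x n‖) atTop (𝓝 0)) :
    Tendsto (fun n => ‖x n - T (x n)‖) atTop (𝓝 0) := by
  obtain ⟨c, hc, hlamc⟩ : ∃ c > 0, ∀ᶠ n in atTop, c < lam n :=
    ⟨_, half_pos hlaminf, eventually_lt_of_lt_liminf (half_lt_self hlaminf)
      (isBoundedUnder_of ⟨0, hlam⟩)⟩
  have hxy : ∀ n, ‖x n - β n • x n‖ ≤ (1 - β n) * M := fun n => by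
    rw [show x n - β n • x n = (1 - β n) • x n by module, norm_smul,
      Real.norm_of_nonneg (sub_nonneg.2 (hβ n).2)]
    exact mul_le_mul_of_nonneg_left (hxM n) (sub_nonneg.2 (hβ n).2)
  have hlim : Tendsto (fun n => (2 + c⁻¹) * ((1 - β n) * M) + c⁻¹ * ‖x (n + 1) - x n‖)
      atTop (𝓝 0) := by
    simpa using ((((tendsto_const_nhds (x := (1 : ℝ))).sub hβlim).mul_const M).const_mul
      (2 + c⁻¹)).add (hdiff.const_mul c⁻¹)
  refine squeeze_zero' (.of_forall fun n => norm_nonneg _) ?_ hlim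
  filter_upwards [hlamc] with n hn
  set y := β n • x n
  have hstep : lam n * ‖T y - y‖ ≤ ‖x (n + 1) - x n‖ + ‖x n - y‖ := by
    rw [← Real.norm_of_nonneg (hlam n), ← norm_smul,
      ← add_sub_cancel_left y (lam n • (T y - y)), ← relax, ← hx n]
    exact norm_sub_le_norm_sub_add_norm_sub _ _ _
  have hTy : ‖T y - y‖ ≤ c⁻¹ * (‖x (n + 1) - x n‖ + ‖x n - y‖) := by
    rw [le_inv_mul_iff₀ hc]
    exact (mul_le_mul_of_nonneg_right hn.le (norm_nonneg _)).trans hstep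
  have hTxy : ‖T y - T (x n)‖ ≤ ‖x n - y‖ := by
    simpa [norm_sub_rev] using hT.norm_sub_le y (x n)
  have htri₁ := norm_sub_le_norm_sub_add_norm_sub (x n) y (T (x n))
  have htri₂ := norm_sub_le_norm_sub_add_norm_sub y (T y) (T (x n))
  have hxyn : ‖x n - y‖ ≤ (1 - β n) * M := hxy n
  have hc0 : 0 ≤ c⁻¹ := inv_nonneg.2 hc.le
  rw [norm_sub_rev y (T y)] at htri₂
  nlinarith [mul_le_mul_of_nonneg_left hxyn hc0]

end IsModKMSeq

end NormedSpace

section InnerProductSpace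

variable {H : Type*} [NormedAddCommGroup H] [InnerProductSpace ℝ H]

theorem IsMinOn.real_inner_self_le_inner {K : Set H} (hK : Convex ℝ K) {p : H} (hp : p ∈ K)
    (hmin : IsMinOn (‖·‖) K p) {z : H} (hz : z ∈ K) : ⟪p, p⟫ ≤ ⟪z, p⟫ := by
  have : Nonempty K := ⟨⟨p, hp⟩⟩
  have hinf : ‖0 - p‖ = ⨅ w : K, ‖0 - (w : H)‖ := by
    refine le_antisymm (le_ciInf fun w => by simpa using isMinOn_iff.1 hmin w w.2) ?_
    exact ciInf_le (f := fun w : K => ‖0 - (w : H)‖)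
      ⟨0, by rintro _ ⟨w, rfl⟩; exact norm_nonneg _⟩ ⟨p, hp⟩
  have := (norm_eq_iInf_iff_real_inner_le_zero hK hp).1 hinf z hz
  rw [zero_sub, inner_neg_left, inner_sub_right, real_inner_comm z] at this
  linarith

theorem isFixedPt_of_tendsto_inner {ι : Type*} {l : Filter ι} [l.NeBot] {T : H → H}
    (hT : LipschitzWith 1 T) {u : ι → H} {M : ℝ} (hu : ∀ i, ‖u i‖ ≤ M) {c : H}
    (hc : ∀ v, Tendsto (fun i => ⟪u i, v⟫) l (𝓝 ⟪c, v⟫))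
    (hres : Tendsto (fun i => ‖u i - T (u i)‖) l (𝓝 0)) : IsFixedPt T c := by
  set d := c - T c
  have key : ∀ i, ‖d‖ ^ 2 ≤
      ‖u i - T (u i)‖ * (‖u i - T (u i)‖ + 2 * (M + ‖c‖)) - 2 * (⟪u i, d⟫ - ⟪c, d⟫) := by
    intro i
    have h1 : ‖u i - T c‖ ≤ ‖u i - T (u i)‖ + ‖u i - c‖ :=
      (norm_sub_le_norm_sub_add_norm_sub _ _ _).trans
        (add_le_add_right (by simpa using hT.norm_sub_le (u i) c) _)
    have h2 : ‖u i - T c‖ ^ 2 = ‖u i - c‖ ^ 2 + 2 * ⟪u i - c, d⟫ + ‖d‖ ^ 2 := by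
      rw [← sub_add_sub_cancel (u i) c (T c), norm_add_sq_real]
    have h3 : ‖u i - c‖ ≤ M + ‖c‖ := (norm_sub_le _ _).trans (by linarith [hu i])
    rw [inner_sub_left] at h2
    nlinarith [pow_le_pow_left₀ (norm_nonneg _) h1 2,
      mul_le_mul_of_nonneg_left h3 (norm_nonneg (u i - T (u i)))]
  have hlim : Tendsto (fun i => ‖u i - T (u i)‖ * (‖u i - T (u i)‖ + 2 * (M + ‖c‖))
      - 2 * (⟪u i, d⟫ - ⟪c, d⟫)) l (𝓝 0) := by
    simpa using (hres.mul (hres.add_const (2 * (M + ‖c‖)))).sub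
      (((hc d).sub_const ⟪c, d⟫).const_mul 2)
  have hd : ‖d‖ ^ 2 ≤ 0 := ge_of_tendsto' hlim key
  have : d = 0 := by simpa using hd
  exact (sub_eq_zero.1 this).symm

theorem exists_tendsto_inner_of_norm_le [CompleteSpace H] {ι : Type*} (U : Ultrafilter ι)
    {u : ι → H} {M : ℝ} (hu : ∀ i, ‖u i‖ ≤ M) :
    ∃ c : H, ∀ v, Tendsto (fun i => ⟪u i, v⟫) U (𝓝 ⟪c, v⟫) := by
  let f : ι → WeakDual ℝ H := fun i => StrongDual.toWeakDual (InnerProductSpace.toDual ℝ H (u i))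
  have hf : (U.map f : Filter (WeakDual ℝ H)) ≤
      𝓟 (WeakDual.toStrongDual ⁻¹' Metric.closedBall 0 M) := by
    rw [Ultrafilter.coe_map, le_principal_iff, mem_map]
    exact univ_mem' fun i => by simpa [f] using hu i
  obtain ⟨g, -, hg⟩ := (WeakDual.isCompact_closedBall 0 M).ultrafilter_le_nhds _ hf
  refine ⟨(InnerProductSpace.toDual ℝ H).symm (WeakDual.toStrongDual g), fun v => ?_⟩
  rw [InnerProductSpace.toDual_symm_apply]
  exact tendsto_iff_forall_eval_tendsto_topDualPairing.1 hg v

theorem eventually_lt_inner_of_tendsto_norm_sub_apply [CompleteSpace H] {ι : Type*}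
    {l : Filter ι} {T : H → H} (hT : LipschitzWith 1 T) {u : ι → H} {M : ℝ}
    (hu : ∀ i, ‖u i‖ ≤ M) (hres : Tendsto (fun i => ‖u i - T (u i)‖) l (𝓝 0)) {v : H} {a : ℝ}
    (hv : ∀ z, IsFixedPt T z → a ≤ ⟪z, v⟫) {ε : ℝ} (hε : 0 < ε) :
    ∀ᶠ i in l, a - ε < ⟪u i, v⟫ := by
  by_contra hfreq
  simp only [not_eventually, not_lt] at hfreq
  have := frequently_iff_neBot.1 hfreq
  let U := Ultrafilter.of (l ⊓ 𝓟 {i | ⟪u i, v⟫ ≤ a - ε})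
  have hU : (U : Filter ι) ≤ l ⊓ 𝓟 {i | ⟪u i, v⟫ ≤ a - ε} := Ultrafilter.of_le _
  obtain ⟨c, hc⟩ := exists_tendsto_inner_of_norm_le U hu
  have hfix := isFixedPt_of_tendsto_inner hT hu hc (hres.mono_left (hU.trans inf_le_left))
  have hcv : ⟪c, v⟫ ≤ a - ε :=
    le_of_tendsto (hc v) (le_principal_iff.1 (hU.trans inf_le_right))
  linarith [hv c hfix]

theorem norm_smul_sub_sq_le {b : ℝ} (hb : b ∈ Set.Icc (0 : ℝ) 1) (y p : H) :
    ‖b • y - p‖ ^ 2 ≤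
      b * ‖y - p‖ ^ 2 + (1 - b) * (2 * b * (⟪p, p⟫ - ⟪y, p⟫) + (1 - b) * ‖p‖ ^ 2) := by
  rw [show b • y - p = b • (y - p) - (1 - b) • p by module, norm_sub_sq_real, norm_smul,
    norm_smul, real_inner_smul_left, real_inner_smul_right, inner_sub_left,
    Real.norm_of_nonneg hb.1, Real.norm_of_nonneg (sub_nonneg.2 hb.2)]
  have : b ^ 2 * ‖y - p‖ ^ 2 ≤ b * ‖y - p‖ ^ 2 :=
    mul_le_mul_of_nonneg_right (by nlinarith [hb.1, hb.2]) (sq_nonneg _)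
  nlinarith

theorem IsModKMSeq.tendsto_of_eventually_lt_inner {T : H → H} {β lam : ℕ → ℝ} {x : ℕ → H}
    (hx : IsModKMSeq T β lam x) (hT : LipschitzWith 1 T) (hβ : ∀ n, β n ∈ Set.Icc (0 : ℝ) 1)
    (hlam : ∀ n, lam n ∈ Set.Icc (0 : ℝ) 1) {p : H} (hp : IsFixedPt T p)
    (hβlim : Tendsto β atTop (𝓝 1)) (hβdiv : ¬ Summable (fun n => 1 - β n))
    (hlim : ∀ ε > 0, ∀ᶠ n in atTop, ⟪p, p⟫ - ε < ⟪x n, p⟫) : Tendsto x atTop (𝓝 p) := by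
  have hrec : ∀ n, ‖x (n + 1) - p‖ ^ 2 ≤ (1 - (1 - β n)) * ‖x n - p‖ ^ 2
      + (1 - β n) * (2 * β n * (⟪p, p⟫ - ⟪x n, p⟫) + (1 - β n) * ‖p‖ ^ 2) + 0 := by
    intro n
    rw [sub_sub_cancel, add_zero, hx n]
    exact (pow_le_pow_left₀ (norm_nonneg _) (norm_relax_sub_le hT (hlam n) hp _) 2).trans
      (norm_smul_sub_sq_le (hβ n) _ _)
  have hδ : ∀ ε > 0, ∀ᶠ n in atTop,
      2 * β n * (⟪p, p⟫ - ⟪x n, p⟫) + (1 - β n) * ‖p‖ ^ 2 ≤ ε := by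
    intro ε hε
    have hβp : Tendsto (fun n => (1 - β n) * ‖p‖ ^ 2) atTop (𝓝 0) := by
      simpa using ((tendsto_const_nhds (x := (1 : ℝ))).sub hβlim).mul_const (‖p‖ ^ 2)
    filter_upwards [hlim (ε / 4) (by positivity), hβp.eventually (ge_mem_nhds (half_pos hε))]
      with n hn hn'
    have : β n * (⟪p, p⟫ - ⟪x n, p⟫) ≤ ε / 4 := by
      rcases le_total 0 (⟪p, p⟫ - ⟪x n, p⟫) with h | h
      · nlinarith [(hβ n).2]
      · nlinarith [(hβ n).1]
    linarith
  have hsq := tendsto_zero_of_le_one_sub_mul_add (a := fun n => ‖x n - p‖ ^ 2)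
    (γ := fun n => 1 - β n) (c := fun _ => 0) (fun n => sq_nonneg _)
    (fun n => sub_nonneg.2 (hβ n).2) (fun n => sub_le_self _ (hβ n).1) hβdiv (fun _ => le_rfl)
    summable_zero hδ hrec
  rw [tendsto_iff_norm_sub_tendsto_zero]
  simpa [Real.sqrt_sq (norm_nonneg _)] using hsq.sqrt

end InnerProductSpace

theorem modKM_strong_convergence_general
    {H : Type*} [NormedAddCommGroup H] [InnerProductSpace ℝ H] [CompleteSpace H]
    (T : H → H) (hT : ∀ x y : H, ‖T x - T y‖ ≤ ‖x - y‖)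
    (β lam : ℕ → ℝ)
    (hβ : ∀ n, 0 < β n ∧ β n ≤ 1)
    (hβlim : Tendsto β atTop (nhds 1))
    (hβdiv : ¬ Summable (fun n => 1 - β n))
    (hβvar : Summable (fun n => |β (n + 1) - β n|))
    (hlam : ∀ n, 0 < lam n ∧ lam n ≤ 1)
    (hlaminf : 0 < Filter.liminf lam Filter.atTop)
    (hlamvar : Summable (fun n => |lam (n + 1) - lam n|))
    (x : ℕ → H)
    (hiter : ∀ n, x (n + 1) = β n • x n + lam n • (T (β n • x n) - β n • x n))
    (p : H) (hp : T p = p) (hpmin : ∀ q : H, T q = q → ‖p‖ ≤ ‖q‖) :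
    Tendsto x atTop (nhds p) := by
  have hT' : LipschitzWith 1 T := .mk_one fun a b => by simpa [dist_eq_norm] using hT a b
  have hx : IsModKMSeq T β lam x := hiter
  have hβ' : ∀ n, β n ∈ Set.Icc (0 : ℝ) 1 := fun n => ⟨(hβ n).1.le, (hβ n).2⟩
  have hlam' : ∀ n, lam n ∈ Set.Icc (0 : ℝ) 1 := fun n => ⟨(hlam n).1.le, (hlam n).2⟩
  have hxM := hx.norm_le hT' hβ' hlam' hp
  have hres := hx.tendsto_norm_sub_apply hT' hβ' (fun n => (hlam' n).1) hxM hβlim hlaminf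
    (hx.tendsto_norm_succ_sub hT' hβ' hlam' hp hβdiv hβvar hlamvar)
  have hvi : ∀ z, IsFixedPt T z → ⟪p, p⟫ ≤ ⟪z, p⟫ := fun z hz =>
    (isMinOn_iff.2 hpmin).real_inner_self_le_inner hT'.convex_fixedPoints hp hz
  exact hx.tendsto_of_eventually_lt_inner hT' hβ' hlam' hp hβlim hβdiv fun ε hε =>
    eventually_lt_inner_of_tendsto_norm_sub_apply hT' hxM hres hvi hε

/-- Strong convergence of the modified Krasnosel'skii–Mann algorithm
`x (n+1) = β n • x n + λ n • (T (β n • x n) - β n • x n)` to the minimal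
norm fixed point of the nonexpansive mapping `T` (the projection of `0`
onto `Fix T`). -/
theorem modKM_strong_convergence
    {H : Type*} [NormedAddCommGroup H] [InnerProductSpace ℝ H] [CompleteSpace H]
    (T : H → H) (hT : ∀ x y : H, ‖T x - T y‖ ≤ ‖x - y‖)
    (hfix_ne : {z : H | T z = z}.Nonempty)
    (β lam : ℕ → ℝ)
    (hβ : ∀ n, 0 < β n ∧ β n ≤ 1)
    (hβlim : Tendsto β atTop (nhds 1))
    (hβdiv : ¬ Summable (fun n => 1 - β n))
    (hβvar : Summable (fun n => |β (n + 1) - β n|))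
    (hlam : ∀ n, 0 < lam n ∧ lam n ≤ 1)
    (hlaminf : 0 < Filter.liminf lam Filter.atTop)
    (hlamvar : Summable (fun n => |lam (n + 1) - lam n|))
    (x : ℕ → H)
    (hiter : ∀ n, x (n + 1) = β n • x n + lam n • (T (β n • x n) - β n • x n))
    (p : H) (hp : T p = p) (hpmin : ∀ q : H, T q = q → ‖p‖ ≤ ‖q‖) :
    Tendsto x atTop (nhds p) :=
  modKM_strong_convergence_general T hT β lam hβ hβlim hβdiv hβvar hlam hlaminf hlamvar x hiter p hp
    hpmin
end

section
/- Let T_i : H → H be α_i-averaged with α_i ∈ (0,1), i = 1,2. Then the composition T_1 ∘ T_2 is α-averaged, where α = (α_1 + α_2 - 2α_1α_2)/(1 - α_1α_2) ∈ (0,1). -/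
/-- `R` is `α`-averaged if `R = (1-α) Id + α T` for some nonexpansive `T`. -/
def IsAveraged {H : Type*} [NormedAddCommGroup H] [InnerProductSpace ℝ H]
    (α : ℝ) (R : H → H) : Prop :=
  ∃ T : H → H, (∀ x y : H, ‖T x - T y‖ ≤ ‖x - y‖) ∧
    ∀ x : H, R x = (1 - α) • x + α • T x

/-! Writing `κ = (1 - α) / α`, an operator `R` is `α`-averaged iff
`‖R x - R y‖² + κ ‖(I - R) x - (I - R) y‖² ≤ ‖x - y‖²`; this is the identity
`‖(1 - α) a + α b‖² + α (1 - α) ‖a - b‖² = (1 - α) ‖a‖² + α ‖b‖²` applied to `a = x - y` and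
`b = T x - T y`. For a composition the residual `(I - R₁ R₂)` splits as the sum of the two residuals,
and the Sedrakyan (Cauchy–Schwarz) inequality `(a + b)² / (κ₁⁻¹ + κ₂⁻¹) ≤ κ₁ a² + κ₂ b²` shows that
`R₁ ∘ R₂` satisfies the inequality with `κ⁻¹ = κ₁⁻¹ + κ₂⁻¹`, i.e. `α / (1 - α)` is additive.
Solving for `α` gives `α = (α₁ + α₂ - 2 α₁ α₂) / (1 - α₁ α₂)`. -/

theorem inv_add_inv_inv_mul_add_sq_le {κ₁ κ₂ : ℝ} (h₁ : 0 < κ₁) (h₂ : 0 < κ₂) (a b : ℝ) :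
    (κ₁⁻¹ + κ₂⁻¹)⁻¹ * (a + b) ^ 2 ≤ κ₁ * a ^ 2 + κ₂ * b ^ 2 := by
  rw [inv_add_inv h₁.ne' h₂.ne', inv_div, div_mul_eq_mul_div, div_le_iff₀ (by positivity)]
  nlinarith [sq_nonneg (κ₁ * a - κ₂ * b)]

theorem norm_sq_comp_add_le {E : Type*} [SeminormedAddCommGroup E] {κ₁ κ₂ : ℝ}
    (hκ₁ : 0 < κ₁) (hκ₂ : 0 < κ₂) {R₁ R₂ : E → E}
    (h₁ : ∀ x y, ‖R₁ x - R₁ y‖ ^ 2 + κ₁ * ‖(x - R₁ x) - (y - R₁ y)‖ ^ 2 ≤ ‖x - y‖ ^ 2)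
    (h₂ : ∀ x y, ‖R₂ x - R₂ y‖ ^ 2 + κ₂ * ‖(x - R₂ x) - (y - R₂ y)‖ ^ 2 ≤ ‖x - y‖ ^ 2)
    (x y : E) :
    ‖R₁ (R₂ x) - R₁ (R₂ y)‖ ^ 2 +
        (κ₁⁻¹ + κ₂⁻¹)⁻¹ * ‖(x - R₁ (R₂ x)) - (y - R₁ (R₂ y))‖ ^ 2 ≤ ‖x - y‖ ^ 2 := by
  set u := (R₂ x - R₁ (R₂ x)) - (R₂ y - R₁ (R₂ y))
  set v := (x - R₂ x) - (y - R₂ y)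
  have hsplit : (x - R₁ (R₂ x)) - (y - R₁ (R₂ y)) = u + v := by simp only [u, v]; abel
  have hmix : (κ₁⁻¹ + κ₂⁻¹)⁻¹ * ‖u + v‖ ^ 2 ≤ κ₁ * ‖u‖ ^ 2 + κ₂ * ‖v‖ ^ 2 :=
    calc (κ₁⁻¹ + κ₂⁻¹)⁻¹ * ‖u + v‖ ^ 2 ≤ (κ₁⁻¹ + κ₂⁻¹)⁻¹ * (‖u‖ + ‖v‖) ^ 2 := by
          gcongr; exact norm_add_le u v
      _ ≤ κ₁ * ‖u‖ ^ 2 + κ₂ * ‖v‖ ^ 2 := inv_add_inv_inv_mul_add_sq_le hκ₁ hκ₂ _ _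
  rw [hsplit]
  linarith [h₁ (R₂ x) (R₂ y), h₂ x y]

section InnerProductSpace

variable {H : Type*} [NormedAddCommGroup H] [InnerProductSpace ℝ H]

theorem norm_one_sub_smul_add_smul_sq (α : ℝ) (a b : H) :
    ‖(1 - α) • a + α • b‖ ^ 2 + α * (1 - α) * ‖a - b‖ ^ 2 =
      (1 - α) * ‖a‖ ^ 2 + α * ‖b‖ ^ 2 := by
  simp only [← real_inner_self_eq_norm_sq, inner_add_left, inner_add_right, inner_sub_left,
    inner_sub_right, real_inner_smul_left, real_inner_smul_right, real_inner_comm a b]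
  ring

theorem norm_sq_add_norm_sq_eq_of_eq_smul_add_smul {α : ℝ} {R T : H → H}
    (hR : ∀ x, R x = (1 - α) • x + α • T x) (x y : H) :
    ‖R x - R y‖ ^ 2 + (1 - α) / α * ‖(x - R x) - (y - R y)‖ ^ 2 =
      (1 - α) * ‖x - y‖ ^ 2 + α * ‖T x - T y‖ ^ 2 := by
  have hdiff : R x - R y = (1 - α) • (x - y) + α • (T x - T y) := by
    rw [hR, hR]; module
  have hres : (x - R x) - (y - R y) = α • ((x - y) - (T x - T y)) := by
    rw [hR, hR]; module
  rw [hdiff, hres, norm_smul, mul_pow, Real.norm_eq_abs, sq_abs,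
    ← norm_one_sub_smul_add_smul_sq]
  field_simp

theorem isAveraged_iff_nonexpansive {α : ℝ} (hα : α ≠ 0) (R : H → H) :
    IsAveraged α R ↔
      ∀ x y, ‖α⁻¹ • (R x - (1 - α) • x) - α⁻¹ • (R y - (1 - α) • y)‖ ≤ ‖x - y‖ := by
  constructor
  · rintro ⟨T, hT, hR⟩ x y
    simpa [hR, smul_smul, inv_mul_cancel₀ hα] using hT x y
  · intro h
    refine ⟨_, h, fun x => ?_⟩
    rw [smul_smul, mul_inv_cancel₀ hα, one_smul, add_sub_cancel]

theorem isAveraged_iff_norm_sq {α : ℝ} (hα : 0 < α) (R : H → H) :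
    IsAveraged α R ↔
      ∀ x y, ‖R x - R y‖ ^ 2 + (1 - α) / α * ‖(x - R x) - (y - R y)‖ ^ 2 ≤ ‖x - y‖ ^ 2 := by
  set T : H → H := fun x => α⁻¹ • (R x - (1 - α) • x)
  have hR : ∀ x, R x = (1 - α) • x + α • T x := fun x => by
    simp only [T, smul_smul, mul_inv_cancel₀ hα.ne', one_smul, add_sub_cancel]
  rw [isAveraged_iff_nonexpansive hα.ne']
  refine forall₂_congr fun x y => ?_
  rw [norm_sq_add_norm_sq_eq_of_eq_smul_add_smul hR]
  change ‖T x - T y‖ ≤ ‖x - y‖ ↔ _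
  rw [← sq_le_sq₀ (norm_nonneg _) (norm_nonneg _), ← mul_le_mul_iff_right₀ hα]
  constructor <;> intro h <;> linarith

end InnerProductSpace

theorem comp_averaged_general
    {H : Type*} [NormedAddCommGroup H] [InnerProductSpace ℝ H]
    (α₁ α₂ : ℝ) (hα₁ : α₁ ∈ Set.Ioo (0 : ℝ) 1) (hα₂ : α₂ ∈ Set.Ioo (0 : ℝ) 1)
    (T₁ T₂ : H → H) (h₁ : IsAveraged α₁ T₁) (h₂ : IsAveraged α₂ T₂) :
    (α₁ + α₂ - 2 * α₁ * α₂) / (1 - α₁ * α₂) ∈ Set.Ioo (0 : ℝ) 1 ∧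
      IsAveraged ((α₁ + α₂ - 2 * α₁ * α₂) / (1 - α₁ * α₂)) (T₁ ∘ T₂) := by
  obtain ⟨h0₁, h1₁⟩ := hα₁
  obtain ⟨h0₂, h1₂⟩ := hα₂
  have hden : 0 < 1 - α₁ * α₂ := by nlinarith
  have hnum : 0 < α₁ + α₂ - 2 * α₁ * α₂ := by nlinarith
  have hα : (α₁ + α₂ - 2 * α₁ * α₂) / (1 - α₁ * α₂) ∈ Set.Ioo (0 : ℝ) 1 :=
    ⟨div_pos hnum hden, (div_lt_one hden).2 (by nlinarith)⟩
  have hsum : α₁ / (1 - α₁) + α₂ / (1 - α₂) =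
      (α₁ + α₂ - 2 * α₁ * α₂) / ((1 - α₁) * (1 - α₂)) := by
    field_simp [(sub_pos.2 h1₁).ne', (sub_pos.2 h1₂).ne']
    ring
  have hκ : (1 - (α₁ + α₂ - 2 * α₁ * α₂) / (1 - α₁ * α₂)) /
      ((α₁ + α₂ - 2 * α₁ * α₂) / (1 - α₁ * α₂)) =
        (((1 - α₁) / α₁)⁻¹ + ((1 - α₂) / α₂)⁻¹)⁻¹ := by
    rw [inv_div, inv_div, hsum, inv_div]
    field_simp [hden.ne']
    ring
  refine ⟨hα, (isAveraged_iff_norm_sq hα.1 _).2 fun x y => ?_⟩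
  rw [hκ]
  exact norm_sq_comp_add_le (div_pos (sub_pos.2 h1₁) h0₁) (div_pos (sub_pos.2 h1₂) h0₂)
    ((isAveraged_iff_norm_sq h0₁ T₁).1 h₁) ((isAveraged_iff_norm_sq h0₂ T₂).1 h₂) x y

/-- Composition of an `α₁`-averaged and an `α₂`-averaged operator is
`α`-averaged with `α = (α₁ + α₂ - 2α₁α₂)/(1 - α₁α₂) ∈ (0,1)`. -/
theorem comp_averaged
    {H : Type*} [NormedAddCommGroup H] [InnerProductSpace ℝ H] [CompleteSpace H]
    (α₁ α₂ : ℝ) (hα₁ : α₁ ∈ Set.Ioo (0 : ℝ) 1) (hα₂ : α₂ ∈ Set.Ioo (0 : ℝ) 1)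
    (T₁ T₂ : H → H) (h₁ : IsAveraged α₁ T₁) (h₂ : IsAveraged α₂ T₂) :
    (α₁ + α₂ - 2 * α₁ * α₂) / (1 - α₁ * α₂) ∈ Set.Ioo (0 : ℝ) 1 ∧
      IsAveraged ((α₁ + α₂ - 2 * α₁ * α₂) / (1 - α₁ * α₂)) (T₁ ∘ T₂) :=
  comp_averaged_general α₁ α₂ hα₁ hα₂ T₁ T₂ h₁ h₂
end
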